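/- arXiv:1001.1014 — 2 statements merged into one kernel-verified Lean document; each statement's English description precedes it below -/
import Mathlib

section
/- Let X̃ᵢ = aUXᵢ + b for i = 1,…,n, where U is a unitary operator on H, a ≠ 0 is a real scalar, and b ∈ H, and let Ĉ and C̃ be the trimmed covariance operators of the original and transformed samples. Then for any φ ∈ H and λ ∈ ℝ, φ is an eigenvector of Ĉ with eigenvalue λ if and only if Uφ is an eigenvector of C̃ with eigenvalue a²λ. In particular the ordered eigenvalues satisfy λ̃ₖ = a²λ̂ₖ and corresponding eigenfunctions satisfy φ̃ₖ = Uφ̂ₖ. -/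
open scoped BigOperators RealInnerProductSpace

/-- The `k`-th smallest value (order statistic) of `f : Fin n → ℝ`. -/
noncomputable def kthSmallest {n : ℕ} (f : Fin n → ℝ) (k : ℕ) : ℝ :=
  sInf {t : ℝ | k ≤ (Finset.univ.filter fun j => f j ≤ t).card}

/-- The α-radius `rᵢ`: the `⌈αn⌉`-th smallest interdistance `‖Xᵢ − Xⱼ‖`, `j = 1,…,n`. -/
noncomputable def sampleRadius {H : Type*} [NormedAddCommGroup H] {n : ℕ}
    (α : ℝ) (X : Fin n → H) (i : Fin n) : ℝ :=
  kthSmallest (fun j => ‖X i - X j‖) ⌈α * n⌉₊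

/-- `rank(rᵢ) = #{j : rⱼ < rᵢ} + #{j ≤ i : rⱼ = rᵢ}`. -/
noncomputable def sampleRank {n : ℕ} (r : Fin n → ℝ) (i : Fin n) : ℕ :=
  (Finset.univ.filter fun j => r j < r i).card +
  (Finset.univ.filter fun j => j ≤ i ∧ r j = r i).card

/-- The weight `w(Xᵢ) = g(rank(rᵢ)/n)`. -/
noncomputable def sampleWeight {H : Type*} [NormedAddCommGroup H] {n : ℕ}
    (g : ℝ → ℝ) (α : ℝ) (X : Fin n → H) (i : Fin n) : ℝ :=
  g ((sampleRank (sampleRadius α X) i : ℝ) / n)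

/-- The trimmed mean `μ̂ = Σᵢ w(Xᵢ)Xᵢ / Σᵢ w(Xᵢ)`. -/
noncomputable def trimmedMean {H : Type*} [NormedAddCommGroup H] [InnerProductSpace ℝ H]
    {n : ℕ} (g : ℝ → ℝ) (α : ℝ) (X : Fin n → H) : H :=
  (∑ i, sampleWeight g α X i)⁻¹ • ∑ i, sampleWeight g α X i • X i

/-- The trimmed covariance operator
`Ĉ(h) = Σᵢ w(Xᵢ)⟨Xᵢ − μ̂, h⟩(Xᵢ − μ̂) / Σᵢ w(Xᵢ)`, as a continuous linear map. -/
noncomputable def trimmedCov {H : Type*} [NormedAddCommGroup H] [InnerProductSpace ℝ H]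
    [CompleteSpace H] {n : ℕ} (g : ℝ → ℝ) (α : ℝ) (X : Fin n → H) : H →L[ℝ] H :=
  (∑ i, sampleWeight g α X i)⁻¹ •
    ∑ i, sampleWeight g α X i •
      ((innerSL ℝ (X i - trimmedMean g α X)).smulRight (X i - trimmedMean g α X))

/-! The map `x ↦ a • U x + b` multiplies all interdistances by `|a|`, hence all α-radii by `|a|`;
ranks, and with them the trimming weights, are unchanged. The trimmed mean is therefore carried
along by the same map, the centred points become `a • U (Xᵢ - μ̂)`, and since `U` preserves inner
products each rank-one term of the covariance picks up the factor `a²`: `C̃ ∘ U = a² • U ∘ Ĉ`.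
As `U` is injective, this intertwining transports eigenpairs. -/

open scoped Pointwise in
lemma kthSmallest_const_mul {n : ℕ} (f : Fin n → ℝ) (k : ℕ) {c : ℝ} (hc : 0 < c) :
    kthSmallest (fun j => c * f j) k = c * kthSmallest f k := by
  have hset : {t : ℝ | k ≤ (Finset.univ.filter fun j => c * f j ≤ t).card} =
      c • {t : ℝ | k ≤ (Finset.univ.filter fun j => f j ≤ t).card} := by
    ext t
    constructor
    · intro ht
      refine ⟨t / c, ?_, by simp only [smul_eq_mul]; field_simp⟩
      simpa [le_div_iff₀ hc, mul_comm] using ht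
    · rintro ⟨s, hs, rfl⟩
      simpa [smul_eq_mul, mul_le_mul_iff_right₀ hc] using hs
  rw [kthSmallest, kthSmallest, hset, Real.sInf_smul_of_nonneg hc.le, smul_eq_mul]

lemma sampleRank_comp_strictMono {n : ℕ} (r : Fin n → ℝ) {f : ℝ → ℝ} (hf : StrictMono f) :
    sampleRank (f ∘ r) = sampleRank r := by
  funext i
  simp only [sampleRank, Function.comp_apply, hf.lt_iff_lt, hf.injective.eq_iff]

section Similarity

variable {E F : Type*} [NormedAddCommGroup E] [NormedAddCommGroup F] {n : ℕ}

lemma sampleRadius_of_norm_sub_eq_mul {X : Fin n → E} {Y : Fin n → F} {c : ℝ} (hc : 0 < c)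
    (hXY : ∀ i j, ‖Y i - Y j‖ = c * ‖X i - X j‖) (α : ℝ) :
    sampleRadius α Y = fun i => c * sampleRadius α X i := by
  funext i
  simp only [sampleRadius, hXY, kthSmallest_const_mul _ _ hc]

lemma sampleWeight_of_norm_sub_eq_mul {X : Fin n → E} {Y : Fin n → F} {c : ℝ} (hc : 0 < c)
    (hXY : ∀ i j, ‖Y i - Y j‖ = c * ‖X i - X j‖) (g : ℝ → ℝ) (α : ℝ) :
    sampleWeight g α Y = sampleWeight g α X := by
  funext i
  have hrank := sampleRank_comp_strictMono (sampleRadius α X) (strictMono_mul_left_of_pos hc)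
  simp only [sampleWeight, sampleRadius_of_norm_sub_eq_mul hc hXY]
  rw [← hrank]
  rfl

end Similarity

section Affine

variable {E F : Type*} [NormedAddCommGroup E] [InnerProductSpace ℝ E]
  [NormedAddCommGroup F] [InnerProductSpace ℝ F] {n : ℕ}
  (g : ℝ → ℝ) (α : ℝ) (X : Fin n → E) (U : E →ₗᵢ[ℝ] F) {a : ℝ} (b : F)

lemma sampleWeight_affine (ha : a ≠ 0) :
    sampleWeight g α (fun i => a • U (X i) + b) = sampleWeight g α X := by
  refine sampleWeight_of_norm_sub_eq_mul (abs_pos.2 ha) (fun i j => ?_) g α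
  rw [add_sub_add_right_eq_sub, ← smul_sub, ← map_sub, norm_smul, Real.norm_eq_abs,
    U.norm_map]

lemma trimmedMean_affine (ha : a ≠ 0) (hw : ∑ i, sampleWeight g α X i ≠ 0) :
    trimmedMean g α (fun i => a • U (X i) + b) = a • U (trimmedMean g α X) + b := by
  have hsum : ∑ i, sampleWeight g α X i • (a • U (X i) + b) =
      a • U (∑ i, sampleWeight g α X i • X i) + (∑ i, sampleWeight g α X i) • b := by
    simp only [smul_add, Finset.sum_add_distrib, Finset.sum_smul, map_sum, map_smul, Finset.smul_sum,
      smul_comm a]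
  rw [trimmedMean, trimmedMean, sampleWeight_affine g α X U b ha, hsum, smul_add, smul_smul _ _ b,
    inv_mul_cancel₀ hw, one_smul, map_smul, smul_comm]

lemma trimmedCov_affine_apply [CompleteSpace E] [CompleteSpace F] (ha : a ≠ 0)
    (hw : ∑ i, sampleWeight g α X i ≠ 0) (φ : E) :
    trimmedCov g α (fun i => a • U (X i) + b) (U φ) = a ^ 2 • U (trimmedCov g α X φ) := by
  have hcentre : ∀ i, (a • U (X i) + b) - trimmedMean g α (fun i => a • U (X i) + b) =
      a • U (X i - trimmedMean g α X) := by
    intro i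
    rw [trimmedMean_affine g α X U b ha hw, add_sub_add_right_eq_sub, ← smul_sub, ← map_sub]
  simp only [trimmedCov, sampleWeight_affine g α X U b ha, smul_apply, sum_apply,
    ContinuousLinearMap.smulRight_apply, innerSL_apply_apply, hcentre, U.inner_map_map, map_smul,
    map_sum, Finset.smul_sum, smul_smul]
  congr 1 with i
  ring_nf

end Affine

lemma eigen_iff_of_intertwine {E F : Type*} [AddCommGroup E] [Module ℝ E] [AddCommGroup F]
    [Module ℝ F] {T : E →ₗ[ℝ] E} {S : F →ₗ[ℝ] F} {U : E →ₗ[ℝ] F} (hU : Function.Injective U)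
    {c : ℝ} (hc : c ≠ 0) (hSU : ∀ φ, S (U φ) = c • U (T φ)) (φ : E) (lam : ℝ) :
    (φ ≠ 0 ∧ T φ = lam • φ) ↔ (U φ ≠ 0 ∧ S (U φ) = (c * lam) • U φ) := by
  have heig : S (U φ) = (c * lam) • U φ ↔ T φ = lam • φ := by
    rw [hSU, mul_smul, ← map_smul U lam φ, (smul_right_injective F hc).eq_iff, hU.eq_iff]
  rw [heig, map_ne_zero_iff U hU]

theorem trimmedCov_eigen_equivariance_general
    {H : Type*} [NormedAddCommGroup H] [InnerProductSpace ℝ H] [CompleteSpace H]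
    {n : ℕ} (X : Fin n → H) (α : ℝ)
    (g : ℝ → ℝ)
    (hw_pos : 0 < ∑ i, sampleWeight g α X i)
    (U : H ≃ₗᵢ[ℝ] H) (a : ℝ) (ha : a ≠ 0) (b : H)
    (Xt : Fin n → H) (hXt : ∀ i, Xt i = a • U (X i) + b) :
    ∀ (φ : H) (lam : ℝ),
      (φ ≠ 0 ∧ trimmedCov g α X φ = lam • φ) ↔
      (U φ ≠ 0 ∧ trimmedCov g α Xt (U φ) = (a ^ 2 * lam) • U φ) := by
  obtain rfl : Xt = fun i => a • U.toLinearIsometry (X i) + b := funext hXt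
  exact eigen_iff_of_intertwine (T := (trimmedCov g α X).toLinearMap)
    (S := (trimmedCov g α _).toLinearMap) (U := U.toLinearIsometry.toLinearMap) U.injective
    (pow_ne_zero 2 ha) (trimmedCov_affine_apply g α X U.toLinearIsometry b ha hw_pos.ne')

/-- If `X̃ᵢ = a • U Xᵢ + b` with `U` unitary, `a ≠ 0`, `b ∈ H`, then for any
`φ ∈ H` and `λ ∈ ℝ`, `φ` is an eigenvector of `Ĉ` with eigenvalue `λ` iff `Uφ` is an
eigenvector of `C̃` with eigenvalue `a²λ`. -/
theorem trimmedCov_eigen_equivariance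
    {H : Type*} [NormedAddCommGroup H] [InnerProductSpace ℝ H] [CompleteSpace H]
    [SecondCountableTopology H]
    {n : ℕ} (X : Fin n → H) (α β : ℝ)
    (hα : 0 < α) (hα' : α ≤ 1 / 2) (hβ : 0 ≤ β) (hβ' : β ≤ 1 / 2)
    (g : ℝ → ℝ)
    (hg_nonneg : ∀ t ∈ Set.Icc (0 : ℝ) 1, 0 ≤ g t)
    (hg_bdd : BddAbove (g '' Set.Icc (0 : ℝ) 1))
    (hg_mono : AntitoneOn g (Set.Icc (0 : ℝ) 1))
    (hg_pos : ∀ t ∈ Set.Icc (0 : ℝ) 1, t < 1 - β → 0 < g t)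
    (hg_zero : ∀ t ∈ Set.Icc (0 : ℝ) 1, 1 - β ≤ t → g t = 0)
    (hw_pos : 0 < ∑ i, sampleWeight g α X i)
    (U : H ≃ₗᵢ[ℝ] H) (a : ℝ) (ha : a ≠ 0) (b : H)
    (Xt : Fin n → H) (hXt : ∀ i, Xt i = a • U (X i) + b) :
    ∀ (φ : H) (lam : ℝ),
      (φ ≠ 0 ∧ trimmedCov g α X φ = lam • φ) ↔
      (U φ ≠ 0 ∧ trimmedCov g α Xt (U φ) = (a ^ 2 * lam) • U φ) :=
  trimmedCov_eigen_equivariance_general X α g hw_pos U a ha b Xt hXt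
end

section
/- Let P̃ be the pushforward of P under the map x ↦ aUx + b, where U is a unitary operator on H, a ≠ 0 is a real scalar, and b ∈ H. Then the population trimmed covariance operator satisfies C(P̃) = a² U∘C(P)∘U*, where U* is the adjoint of U. -/
open MeasureTheory
open scoped RealInnerProductSpace

/-- `F_P(t; v) = P(‖X − v‖ ≤ t)`. -/
noncomputable def Fpop {H : Type*} [NormedAddCommGroup H] [MeasurableSpace H]
    (P : Measure H) (t : ℝ) (v : H) : ℝ :=
  (P {x | ‖x - v‖ ≤ t}).toReal

/-- The α-radius `r_P(v) = inf {t ≥ 0 : F_P(t; v) ≥ α}`. -/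
noncomputable def rpop {H : Type*} [NormedAddCommGroup H] [MeasurableSpace H]
    (α : ℝ) (P : Measure H) (v : H) : ℝ :=
  sInf {t : ℝ | 0 ≤ t ∧ α ≤ Fpop P t v}

/-- `G_P(t) = P(r_P(X) ≤ t)`. -/
noncomputable def Gpop {H : Type*} [NormedAddCommGroup H] [MeasurableSpace H]
    (α : ℝ) (P : Measure H) (t : ℝ) : ℝ :=
  (P {x | rpop α P x ≤ t}).toReal

/-- The population weight function `w_P(v) = g(G_P(r_P(v)))`. -/
noncomputable def wpop {H : Type*} [NormedAddCommGroup H] [MeasurableSpace H]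
    (g : ℝ → ℝ) (α : ℝ) (P : Measure H) (v : H) : ℝ :=
  g (Gpop α P (rpop α P v))

/-- The population trimmed mean `μ(P) = E_P[w_P(X)X] / E_P[w_P(X)]`. -/
noncomputable def meanPop {H : Type*} [NormedAddCommGroup H] [InnerProductSpace ℝ H]
    [CompleteSpace H] [MeasurableSpace H] (g : ℝ → ℝ) (α : ℝ) (P : Measure H) : H :=
  (∫ x, wpop g α P x ∂P)⁻¹ • ∫ x, wpop g α P x • x ∂P

/-- The population trimmed covariance operator
`C(P)(h) = E_P[w_P(X)⟨X − μ(P), h⟩(X − μ(P))] / E_P[w_P(X)]`. -/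
noncomputable def covPop {H : Type*} [NormedAddCommGroup H] [InnerProductSpace ℝ H]
    [CompleteSpace H] [MeasurableSpace H] (g : ℝ → ℝ) (α : ℝ) (P : Measure H) (h : H) : H :=
  (∫ x, wpop g α P x ∂P)⁻¹ •
    ∫ x, (wpop g α P x * ⟪x - meanPop g α P, h⟫) • (x - meanPop g α P) ∂P

/-! The map `e x = a • U x + b` scales all distances by `|a|`. Hence the pushforward puts on the
ball of radius `|a| t` around `e v` the mass that `P` puts on the ball of radius `t` around `v`, so
`r_{P̃} (e v) = |a| r_P(v)`, `G_{P̃}(|a| t) = G_P(t)`, and the weight is transported: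
`w_{P̃}(e x) = w_P(x)`. Changing variables then gives `μ(P̃) = e(μ(P))`, after which the covariance
identity is a pointwise computation.

The mean identity splits an integral and so needs `w_P(X) X` to be integrable. Since the Bochner
integral of a non-integrable function is `0`, the hypothesis `0 < E_P[w_P(X)]` makes `w_P`
integrable; and `w_P` vanishes outside a ball, because far-away points have large α-radius, hence
rank `G_P(r_P(x)) ≥ 1 - β`. -/

theorem LinearIsometryEquiv.integral_comp_comm {X E F : Type*} [MeasurableSpace X] {μ : Measure X}
    [NormedAddCommGroup E] [NormedSpace ℝ E] [CompleteSpace E] [NormedAddCommGroup F]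
    [NormedSpace ℝ F] [CompleteSpace F] (U : E ≃ₗᵢ[ℝ] F) (φ : X → E) :
    ∫ x, U (φ x) ∂μ = U (∫ x, φ x ∂μ) :=
  U.toLinearIsometry.integral_comp_comm φ

section

variable {H : Type*} [NormedAddCommGroup H] [MeasurableSpace H] {P : Measure H}

open Metric
open scoped Pointwise

lemma Fpop_eq_measureReal_closedBall (P : Measure H) (t : ℝ) (v : H) :
    Fpop P t v = P.real (closedBall v t) := by
  simp only [Fpop, closedBall, dist_eq_norm, measureReal_def]

lemma exists_lt_Fpop [IsProbabilityMeasure P] [OpensMeasurableSpace H] (v : H) {c : ℝ}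
    (hc : c < 1) :
    ∃ t, 0 ≤ t ∧ c < Fpop P t v := by
  have hlim : Filter.Tendsto (fun n : ℕ => P (closedBall v n)) Filter.atTop (nhds 1) := by
    have hmono : Monotone fun n : ℕ => closedBall v (n : ℝ) := fun m n hmn =>
      closedBall_subset_closedBall (Nat.cast_le.mpr hmn)
    have := tendsto_measure_iUnion_atTop (μ := P) hmono
    rwa [iUnion_closedBall_nat, measure_univ] at this
  have hlim' := (ENNReal.tendsto_toReal ENNReal.one_ne_top).comp hlim
  obtain ⟨n, hn⟩ := (hlim'.eventually (eventually_gt_nhds hc)).exists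
  exact ⟨n, n.cast_nonneg, by simpa [Fpop_eq_measureReal_closedBall, measureReal_def] using hn⟩

lemma rpop_le {α t : ℝ} {v : H} (ht : 0 ≤ t) (hF : α ≤ Fpop P t v) : rpop α P v ≤ t :=
  csInf_le ⟨0, fun _ hs => hs.1⟩ ⟨ht, hF⟩

lemma rpop_le_add_norm_sub [IsFiniteMeasure P] {α t : ℝ} {v : H} (ht : 0 ≤ t)
    (hF : α ≤ Fpop P t v) (y : H) : rpop α P y ≤ t + ‖y - v‖ := by
  refine rpop_le (by positivity) (hF.trans ?_)
  simp only [Fpop_eq_measureReal_closedBall]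
  exact measureReal_mono (closedBall_subset_closedBall' (by rw [dist_comm, dist_eq_norm]))

/-- A ball of mass more than `1 - α` leaves mass less than `α` to any ball disjoint from it. -/
lemma norm_sub_sub_le_rpop [IsProbabilityMeasure P] [OpensMeasurableSpace H] {α t₀ : ℝ}
    (hα : α < 1) {v : H} (hF : 1 - α < Fpop P t₀ v) (x : H) : ‖x - v‖ - t₀ ≤ rpop α P x := by
  obtain ⟨t, ht, hFt⟩ := exists_lt_Fpop (P := P) x hα
  refine le_csInf ⟨t, ht, hFt.le⟩ fun s ⟨_, hs⟩ => ?_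
  by_contra! hlt
  have hdisj : Disjoint (closedBall x s) (closedBall v t₀) :=
    closedBall_disjoint_closedBall (by rw [dist_eq_norm]; linarith)
  have hsum := measureReal_union (μ := P) hdisj measurableSet_closedBall
  rw [Fpop_eq_measureReal_closedBall] at hs hF
  linarith [measureReal_le_one (μ := P) (s := closedBall x s ∪ closedBall v t₀)]

lemma Fpop_le_Gpop [IsFiniteMeasure P] {α t s : ℝ} {v : H} (ht : 0 ≤ t)
    (hF : α ≤ Fpop P t v) : Fpop P s v ≤ Gpop α P (s + t) := by
  rw [Fpop_eq_measureReal_closedBall, Gpop, ← measureReal_def]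
  refine measureReal_mono fun z hz => ?_
  rw [mem_closedBall, dist_eq_norm] at hz
  have := rpop_le_add_norm_sub ht hF z
  change rpop α P z ≤ s + t
  linarith

lemma Gpop_mono (α : ℝ) (P : Measure H) [IsFiniteMeasure P] : Monotone (Gpop α P) :=
  fun _ _ h => measureReal_mono fun _ hx => le_trans hx h

lemma Gpop_mem_Icc (α : ℝ) (P : Measure H) [IsProbabilityMeasure P] (t : ℝ) :
    Gpop α P t ∈ Set.Icc (0 : ℝ) 1 :=
  ⟨measureReal_nonneg, measureReal_le_one⟩

lemma exists_wpop_eq_zero_of_le_norm [IsProbabilityMeasure P] [OpensMeasurableSpace H]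
    {g : ℝ → ℝ} {α β : ℝ} (hα : 0 < α) (hα' : α < 1) (hβ : 0 < β)
    (hg_zero : ∀ t ∈ Set.Icc (0 : ℝ) 1, 1 - β ≤ t → g t = 0) :
    ∃ R, ∀ x : H, R ≤ ‖x‖ → wpop g α P x = 0 := by
  obtain ⟨t₀, -, ht₀⟩ := exists_lt_Fpop (P := P) 0 (c := 1 - α) (by linarith)
  obtain ⟨t₁, ht₁, hFt₁⟩ :=
    exists_lt_Fpop (P := P) 0 (c := max α (1 - β)) (max_lt hα' (by linarith))
  rw [max_lt_iff] at hFt₁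
  refine ⟨t₀ + 2 * t₁, fun x hx => hg_zero _ (Gpop_mem_Icc α P _) ?_⟩
  have hr := norm_sub_sub_le_rpop hα' ht₀ x
  rw [sub_zero] at hr
  calc 1 - β ≤ Fpop P t₁ 0 := hFt₁.2.le
    _ ≤ Fpop P (‖x‖ - t₀ - t₁) 0 := by
      simp only [Fpop_eq_measureReal_closedBall]
      exact measureReal_mono (closedBall_subset_closedBall (by linarith))
    _ ≤ Gpop α P (‖x‖ - t₀ - t₁ + t₁) := Fpop_le_Gpop ht₁ hFt₁.1.le
    _ ≤ Gpop α P (rpop α P x) := Gpop_mono α P (by linarith)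

lemma integrable_smul_self_of_eq_zero_of_le_norm [NormedSpace ℝ H] [OpensMeasurableSpace H]
    [SecondCountableTopology H] {f : H → ℝ} (hf : Integrable f P) {R : ℝ}
    (hR : ∀ x, R ≤ ‖x‖ → f x = 0) :
    Integrable (fun x => f x • x) P := by
  refine (hf.norm.const_mul R).mono' (hf.aestronglyMeasurable.smul aestronglyMeasurable_id)
    (.of_forall fun x => ?_)
  rw [norm_smul, mul_comm]
  rcases le_or_gt R ‖x‖ with hx | hx
  · simp [hR x hx]
  · gcongr

section Similarity

variable {e : H ≃ᵐ H} {s : ℝ} (hs : 0 < s) (he : ∀ x y, ‖e x - e y‖ = s * ‖x - y‖)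
include hs he

lemma Fpop_map_of_similarity (t : ℝ) (v : H) : Fpop (P.map e) (s * t) (e v) = Fpop P t v := by
  unfold Fpop
  rw [e.map_apply]
  congr 2
  ext x
  simp only [Set.mem_preimage, Set.mem_ofPred_eq, he, mul_le_mul_iff_right₀ hs]

lemma rpop_map_of_similarity (α : ℝ) (v : H) : rpop α (P.map e) (e v) = s * rpop α P v := by
  have hset : {t | 0 ≤ t ∧ α ≤ Fpop (P.map e) t (e v)} = s • {t | 0 ≤ t ∧ α ≤ Fpop P t v} := by
    ext t
    rw [Set.mem_smul_set_iff_inv_smul_mem₀ hs.ne', smul_eq_mul]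
    nth_rw 1 [← mul_inv_cancel_left₀ hs.ne' t]
    simp only [Set.mem_ofPred_eq, Fpop_map_of_similarity hs he, mul_nonneg_iff_of_pos_left hs]
  rw [rpop, hset, Real.sInf_smul_of_nonneg hs.le, smul_eq_mul, rpop]

lemma Gpop_map_of_similarity (α t : ℝ) : Gpop α (P.map e) (s * t) = Gpop α P t := by
  unfold Gpop
  rw [e.map_apply]
  congr 2
  ext x
  simp only [Set.mem_preimage, Set.mem_ofPred_eq, rpop_map_of_similarity hs he,
    mul_le_mul_iff_right₀ hs]

lemma wpop_map_of_similarity (g : ℝ → ℝ) (α : ℝ) (v : H) :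
    wpop g α (P.map e) (e v) = wpop g α P v := by
  rw [wpop, rpop_map_of_similarity hs he, Gpop_map_of_similarity hs he, wpop]

lemma integral_wpop_map_of_similarity [NormedSpace ℝ H] [CompleteSpace H] (g : ℝ → ℝ) (α : ℝ) :
    ∫ x, wpop g α (P.map e) x ∂(P.map e) = ∫ x, wpop g α P x ∂P := by
  simp only [integral_map_equiv, wpop_map_of_similarity hs he]

end Similarity

section Affine

variable [InnerProductSpace ℝ H] [BorelSpace H]

noncomputable def similarityEquiv (U : H ≃ₗᵢ[ℝ] H) {a : ℝ} (ha : a ≠ 0) (b : H) : H ≃ᵐ H :=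
  (U.toHomeomorph.trans ((Homeomorph.smulOfNeZero a ha).trans
    (Homeomorph.addRight b))).toMeasurableEquiv

variable (U : H ≃ₗᵢ[ℝ] H) {a : ℝ} (ha : a ≠ 0) (b : H)

@[simp]
lemma similarityEquiv_apply (x : H) : similarityEquiv U ha b x = a • U x + b := rfl

lemma similarityEquiv_sub (x y : H) :
    similarityEquiv U ha b x - similarityEquiv U ha b y = a • U (x - y) := by
  simp only [similarityEquiv_apply, add_sub_add_right_eq_sub, map_sub, smul_sub]

lemma norm_similarityEquiv_sub (x y : H) :
    ‖similarityEquiv U ha b x - similarityEquiv U ha b y‖ = |a| * ‖x - y‖ := by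
  rw [similarityEquiv_sub, norm_smul, Real.norm_eq_abs, U.norm_map]

variable [CompleteSpace H] {g : ℝ → ℝ} {α : ℝ}

lemma meanPop_map_similarityEquiv (hw : Integrable (wpop g α P) P)
    (hwx : Integrable (fun x => wpop g α P x • x) P) (hE : ∫ x, wpop g α P x ∂P ≠ 0) :
    meanPop g α (P.map (similarityEquiv U ha b)) = similarityEquiv U ha b (meanPop g α P) := by
  have hs := abs_pos.2 ha
  have he := norm_similarityEquiv_sub U ha b
  have hpt : ∀ x, wpop g α (P.map (similarityEquiv U ha b)) (similarityEquiv U ha b x) •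
      similarityEquiv U ha b x = a • U (wpop g α P x • x) + wpop g α P x • b := by
    intro x
    rw [wpop_map_of_similarity hs he, similarityEquiv_apply, smul_add, map_smul, smul_comm]
  rw [meanPop, integral_wpop_map_of_similarity hs he, integral_map_equiv]
  simp only [hpt]
  have hUwx : Integrable (fun x => a • U (wpop g α P x • x)) P :=
    (U.integrable_comp_iff.2 hwx).smul a
  rw [integral_add hUwx (hw.smul_const b), integral_smul, U.integral_comp_comm,
    integral_smul_const]
  simp only [meanPop, similarityEquiv_apply, map_smul, smul_add, smul_smul, inv_mul_cancel₀ hE,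
    one_smul, mul_comm]

lemma covPop_map_similarityEquiv
    (hmean : meanPop g α (P.map (similarityEquiv U ha b)) = similarityEquiv U ha b (meanPop g α P))
    (h : H) :
    covPop g α (P.map (similarityEquiv U ha b)) h = a ^ 2 • U (covPop g α P (U.symm h)) := by
  have hs := abs_pos.2 ha
  have he := norm_similarityEquiv_sub U ha b
  set μ := meanPop g α P
  have hpt : ∀ x, (wpop g α P x * ⟪a • U (x - μ), h⟫) • (a • U (x - μ)) =
      a ^ 2 • U ((wpop g α P x * ⟪x - μ, U.symm h⟫) • (x - μ)) := by
    intro x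
    rw [real_inner_smul_left, U.inner_map_eq_flip, map_smul, smul_smul, smul_smul]
    ring_nf
  rw [covPop, covPop, integral_wpop_map_of_similarity hs he, hmean, integral_map_equiv]
  simp only [wpop_map_of_similarity hs he, similarityEquiv_sub, hpt]
  rw [integral_smul, U.integral_comp_comm, smul_comm, map_smul]

end Affine

end

theorem covPop_equivariance_general
    {H : Type*} [NormedAddCommGroup H] [InnerProductSpace ℝ H] [CompleteSpace H]
    [SecondCountableTopology H] [MeasurableSpace H] [BorelSpace H]
    (P : Measure H) [IsProbabilityMeasure P]
    (α β : ℝ) (hα : 0 < α) (hα' : α ≤ 1 / 2) (hβ : 0 < β)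
    (g : ℝ → ℝ)
    (hg_zero : ∀ t ∈ Set.Icc (0 : ℝ) 1, 1 - β ≤ t → g t = 0)
    (hE : 0 < ∫ x, wpop g α P x ∂P)
    (U : H ≃ₗᵢ[ℝ] H) (a : ℝ) (ha : a ≠ 0) (b : H)
    (Pt : Measure H) (hPt : Pt = Measure.map (fun x => a • U x + b) P) :
    ∀ h : H,
      covPop g α Pt h =
        a ^ 2 •
          U (covPop g α P
            (ContinuousLinearMap.adjoint U.toLinearIsometry.toContinuousLinearMap h)) := by
  intro h
  obtain ⟨R, hR⟩ := exists_wpop_eq_zero_of_le_norm (P := P) hα (by linarith) hβ hg_zero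
  have hw : Integrable (wpop g α P) P := .of_integral_ne_zero hE.ne'
  have hmean := meanPop_map_similarityEquiv U ha b hw
    (integrable_smul_self_of_eq_zero_of_le_norm hw hR) hE.ne'
  have hPt' : Pt = P.map (similarityEquiv U ha b) := hPt
  have hadj : ContinuousLinearMap.adjoint U.toLinearIsometry.toContinuousLinearMap h = U.symm h :=
    congr($(U.adjoint_eq_symm) h)
  rw [hPt', hadj, covPop_map_similarityEquiv U ha b hmean]

/-- If `P̃` is the pushforward of `P` under `x ↦ a • U x + b` with `U`
unitary, `a ≠ 0`, `b ∈ H`, then the population trimmed covariance operator satisfies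
`C(P̃) = a² U ∘ C(P) ∘ U*`, where `U*` is the adjoint of `U`. -/
theorem covPop_equivariance
    {H : Type*} [NormedAddCommGroup H] [InnerProductSpace ℝ H] [CompleteSpace H]
    [SecondCountableTopology H] [MeasurableSpace H] [BorelSpace H]
    (P : Measure H) [IsProbabilityMeasure P]
    (α β : ℝ) (hα : 0 < α) (hα' : α ≤ 1 / 2) (hβ : 0 < β) (hβ' : β ≤ 1 / 2)
    (g : ℝ → ℝ)
    (hg_nonneg : ∀ t ∈ Set.Icc (0 : ℝ) 1, 0 ≤ g t)
    (hg_bdd : BddAbove (g '' Set.Icc (0 : ℝ) 1))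
    (hg_mono : AntitoneOn g (Set.Icc (0 : ℝ) 1))
    (hg_pos : ∀ t ∈ Set.Icc (0 : ℝ) 1, t < 1 - β → 0 < g t)
    (hg_zero : ∀ t ∈ Set.Icc (0 : ℝ) 1, 1 - β ≤ t → g t = 0)
    (hE : 0 < ∫ x, wpop g α P x ∂P)
    (U : H ≃ₗᵢ[ℝ] H) (a : ℝ) (ha : a ≠ 0) (b : H)
    (Pt : Measure H) (hPt : Pt = Measure.map (fun x => a • U x + b) P) :
    ∀ h : H,
      covPop g α Pt h =
        a ^ 2 •
          U (covPop g α P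
            (ContinuousLinearMap.adjoint U.toLinearIsometry.toContinuousLinearMap h)) :=
  covPop_equivariance_general P α β hα hα' hβ g hg_zero hE U a ha b Pt hPt
end
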